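/- arXiv:1902.07568 — 5 statements merged into one kernel-verified Lean document; each statement's English description precedes it below -/
import Mathlib

section
/- For every real ε with 0 < ε < 1/3, ε / ((1-ε)·log(1+ε)) ≤ 1/(1 - (3/2)ε) ≤ 1 + 3ε. -/
/-- For 0 < ε < 1/3: ε/((1-ε)·log(1+ε)) ≤ 1/(1-(3/2)ε) ≤ 1+3ε. -/
theorem gamma_chain (ε : ℝ) (h0 : 0 < ε) (h1 : ε < 1 / 3) :
    ε / ((1 - ε) * Real.log (1 + ε)) ≤ 1 / (1 - (3 / 2) * ε) ∧
      1 / (1 - (3 / 2) * ε) ≤ 1 + 3 * ε := by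
  have hε1 : ε < 1 := by linarith
  have h1e : (0:ℝ) < 1 - ε := by linarith
  have hden : (0:ℝ) < 1 - (3/2) * ε := by linarith
  have habs : |(-ε)| < 1 := by rw [abs_neg, abs_of_pos h0]; exact hε1
  have hT := Real.abs_log_sub_add_sum_range_le habs 3
  have hsum : (∑ i ∈ Finset.range 3, (-ε) ^ (i + 1) / (i + 1)) = -ε + ε^2/2 - ε^3/3 := by
    simp [Finset.sum_range_succ]
    ring
  rw [hsum, abs_neg, abs_of_pos h0, show (1 : ℝ) - -ε = 1 + ε by ring] at hT
  have hT' : Real.log (1 + ε) ≥ ε - ε^2/2 + ε^3/3 - ε^4/(1-ε) := by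
    have := abs_le.1 hT
    have h2 : ε^(3+1) = ε^4 := by ring
    rw [h2] at this
    linarith [this.1]
  have hlogpos : 0 < Real.log (1 + ε) := Real.log_pos (by linarith)
  constructor
  · rw [div_le_div_iff₀ (by positivity) hden]
    have key : ε * (1 - (3/2)*ε) ≤ (1-ε) * (ε - ε^2/2 + ε^3/3 - ε^4/(1-ε)) := by
      have : (1-ε) * (ε - ε^2/2 + ε^3/3 - ε^4/(1-ε))
          = (1-ε) * (ε - ε^2/2 + ε^3/3) - ε^4 := by
        field_simp
      rw [this]
      nlinarith [pow_nonneg h0.le 3, pow_nonneg h0.le 4, sq_nonneg ε]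
    calc ε * (1 - (3/2)*ε) ≤ (1-ε) * (ε - ε^2/2 + ε^3/3 - ε^4/(1-ε)) := key
      _ ≤ (1-ε) * Real.log (1+ε) := mul_le_mul_of_nonneg_left hT' h1e.le
      _ = 1 * ((1-ε) * Real.log (1+ε)) := (one_mul _).symm
  · rw [div_le_iff₀ hden]
    nlinarith [sq_nonneg ε]
end

section
/- Let ε > 0, δ > 0, c > 0 be reals, and let c_1,…,c_r be reals with 0 < c_j ≤ c for all j. If δ·∏_{j=1}^r (1 + ε c_j/c) < 1 + ε, then (∑_{j=1}^r c_j)/c ≤ log_{1+ε}((1+ε)/δ). -/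
open Finset in
/-- Feasibility lemma: if δ·∏ (1 + ε cⱼ/c) < 1+ε then (∑ cⱼ)/c ≤ log_{1+ε}((1+ε)/δ). -/
theorem feasibility_unit (ε δ c : ℝ) (r : ℕ) (cj : ℕ → ℝ)
    (hε : 0 < ε) (hδ : 0 < δ) (hc : 0 < c)
    (hpos : ∀ j ∈ range r, 0 < cj j) (hle : ∀ j ∈ range r, cj j ≤ c)
    (hprod : δ * ∏ j ∈ range r, (1 + ε * cj j / c) < 1 + ε) :
    (∑ j ∈ range r, cj j) / c ≤ Real.log ((1 + ε) / δ) / Real.log (1 + ε) := by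
  set S : ℝ := (∑ j ∈ range r, cj j) / c with hS
  have h1ε : (1:ℝ) < 1 + ε := by linarith
  have hkey : (1 + ε) ^ S ≤ ∏ j ∈ range r, (1 + ε * cj j / c) := by
    rw [hS, sum_div, Real.rpow_sum_of_pos (by linarith)]
    refine Finset.prod_le_prod (fun j hj => Real.rpow_nonneg (by linarith) _) ?_
    intro j hj
    have h0 : 0 ≤ cj j / c := le_of_lt (div_pos (hpos j hj) hc)
    have h1 : cj j / c ≤ 1 := (div_le_one hc).mpr (hle j hj)
    have := rpow_one_add_le_one_add_mul_self (s := ε) (by linarith) h0 h1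
    calc (1 + ε) ^ (cj j / c) ≤ 1 + cj j / c * ε := this
      _ = 1 + ε * cj j / c := by ring
  have hlt : (1 + ε) ^ S < (1 + ε) / δ := by
    rw [lt_div_iff₀ hδ]
    calc (1 + ε) ^ S * δ = δ * (1 + ε) ^ S := by ring
      _ ≤ δ * ∏ j ∈ range r, (1 + ε * cj j / c) := by
          exact mul_le_mul_of_nonneg_left hkey hδ.le
      _ < 1 + ε := hprod
  have hlog : S * Real.log (1 + ε) < Real.log ((1 + ε) / δ) := by
    have := Real.log_lt_log (Real.rpow_pos_of_pos (by linarith) S) hlt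
    rwa [Real.log_rpow (by linarith)] at this
  have hlogpos : 0 < Real.log (1 + ε) := Real.log_pos h1ε
  rw [le_div_iff₀ hlogpos]
  linarith
end

section
/- Let ε > 0, δ > 0, w > 0, c > 0 be reals and c_1,…,c_r reals with 0 < c_j ≤ c. If δ·∏_{j=1}^r (1 + ε c_j/c) < (1+ε)(1+w), then (∑_{j=1}^r c_j)/c ≤ log_{1+ε}((1+ε)(1+w)/δ). -/
open Finset in
/-- Feasibility lemma (general edge lengths): if δ·∏ (1 + ε cⱼ/c) < (1+ε)(1+w)
    then (∑ cⱼ)/c ≤ log_{1+ε}((1+ε)(1+w)/δ). -/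
theorem feasibility_general (ε δ w c : ℝ) (r : ℕ) (cj : ℕ → ℝ)
    (hε : 0 < ε) (hδ : 0 < δ) (hw : 0 < w) (hc : 0 < c)
    (hpos : ∀ j ∈ range r, 0 < cj j) (hle : ∀ j ∈ range r, cj j ≤ c)
    (hprod : δ * ∏ j ∈ range r, (1 + ε * cj j / c) < (1 + ε) * (1 + w)) :
    (∑ j ∈ range r, cj j) / c ≤
      Real.log ((1 + ε) * (1 + w) / δ) / Real.log (1 + ε) := by
  have h1ε : (1 : ℝ) < 1 + ε := by linarith
  have hb : (0 : ℝ) < 1 + ε := by linarith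
  -- (1+ε)^(S/c) ≤ ∏ (1 + ε cj/c)
  have key : (1 + ε) ^ ((∑ j ∈ range r, cj j) / c) ≤
      ∏ j ∈ range r, (1 + ε * cj j / c) := by
    have : (1 + ε) ^ ((∑ j ∈ range r, cj j) / c)
        = ∏ j ∈ range r, (1 + ε) ^ (cj j / c) := by
      rw [← Real.rpow_sum_of_pos hb, Finset.sum_div]
    rw [this]
    apply Finset.prod_le_prod
    · intro j hj; positivity
    · intro j hj
      have h1 := rpow_one_add_le_one_add_mul_self (s := ε) (p := cj j / c)
        (by linarith) (div_nonneg (hpos j hj).le hc.le) (by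
          rw [div_le_one hc]; exact hle j hj)
      calc (1 + ε) ^ (cj j / c) ≤ 1 + (cj j / c) * ε := h1
        _ = 1 + ε * cj j / c := by ring
  have hlt : δ * (1 + ε) ^ ((∑ j ∈ range r, cj j) / c) < (1 + ε) * (1 + w) :=
    lt_of_le_of_lt (by nlinarith [key]) hprod
  have hpow : (1 + ε) ^ ((∑ j ∈ range r, cj j) / c) < (1 + ε) * (1 + w) / δ := by
    rw [lt_div_iff₀ hδ]; nlinarith [hlt]
  have hlog : ((∑ j ∈ range r, cj j) / c) * Real.log (1 + ε) ≤
      Real.log ((1 + ε) * (1 + w) / δ) := by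
    have := Real.log_le_log (by positivity) hpow.le
    rwa [Real.log_rpow hb] at this
  have hlogpos : 0 < Real.log (1 + ε) := Real.log_pos h1ε
  exact (le_div_iff₀ hlogpos).mpr hlog
end

section
/- Let ε ∈ (0,1), L ≥ 2 an integer, δ = (1+ε)/((1+ε)L)^{1/ε}, and suppose β, f_τ > 0 satisfy β/f_τ ≤ ε/log(1/(δL)). Then β·log_{1+ε}((1+ε)/δ)/f_τ ≤ ε/((1−ε)·log(1+ε)), and if moreover ε < 1/3 then this quantity is at most 1 + 3ε. -/
/-- Approximation ratio for unit edge lengths: with δ = (1+ε)/((1+ε)L)^{1/ε} and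
    β/f ≤ ε/log(1/(δL)), we get β·log_{1+ε}((1+ε)/δ)/f ≤ ε/((1−ε)log(1+ε)),
    which is at most 1+3ε when ε < 1/3. -/
theorem approx_ratio_unit (ε β fτ : ℝ) (L : ℕ)
    (hε0 : 0 < ε) (hε1 : ε < 1) (hL : 2 ≤ L) (hβ : 0 < β) (hf : 0 < fτ) :
    let δ : ℝ := (1 + ε) / ((1 + ε) * (L : ℝ)) ^ (1 / ε)
    β / fτ ≤ ε / Real.log (1 / (δ * (L : ℝ))) →
      (β * (Real.log ((1 + ε) / δ) / Real.log (1 + ε)) / fτ ≤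
          ε / ((1 - ε) * Real.log (1 + ε)) ∧
        (ε < 1 / 3 →
          β * (Real.log ((1 + ε) / δ) / Real.log (1 + ε)) / fτ ≤ 1 + 3 * ε)) := by
  intro δ hβf
  have hε1' : (1:ℝ) < 1 + ε := by linarith
  have hL2 : (2:ℝ) ≤ (L:ℝ) := by exact_mod_cast hL
  set x : ℝ := (1 + ε) * (L:ℝ) with hx
  have hx1 : 1 < x := by nlinarith
  have hx0 : 0 < x := by linarith
  have hp0 : 0 < x ^ (1/ε) := Real.rpow_pos_of_pos hx0 _
  have hδdef : δ = (1+ε) / x ^ (1/ε) := rfl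
  have h1 : (1+ε)/δ = x ^ (1/ε) := by
    rw [hδdef]; field_simp
  have h2 : 1/(δ * (L:ℝ)) = x ^ (1/ε - 1) := by
    rw [hδdef, Real.rpow_sub hx0, Real.rpow_one]
    field_simp
    exact hx
  have hLx : 0 < Real.log x := Real.log_pos hx1
  have hLl : 0 < Real.log (1+ε) := Real.log_pos hε1'
  rw [h2, Real.log_rpow hx0] at hβf
  rw [h1, Real.log_rpow hx0]
  set a := Real.log x
  set b := Real.log (1+ε)
  have h3 : 0 < 1/ε - 1 := by
    have : ε * (1/ε) = 1 := by field_simp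
    nlinarith
  have hc : (0:ℝ) ≤ (1/ε * a)/b := by positivity
  have key : β * (1/ε * a / b) / fτ ≤ ε / ((1-ε)*b) := by
    have e1 : β * (1/ε * a / b) / fτ = (β/fτ) * ((1/ε * a)/b) := by ring
    rw [e1]
    calc (β/fτ) * ((1/ε * a)/b) ≤ (ε/((1/ε - 1)*a)) * ((1/ε * a)/b) :=
          mul_le_mul_of_nonneg_right hβf hc
      _ = ε / ((1-ε)*b) := by
          have hne : (1:ℝ)-ε ≠ 0 := by linarith
          field_simp
  refine ⟨key, fun hε3 => ?_⟩
  have hb'' : ε ≤ (1+ε) * b := by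
    have hlog := Real.log_le_sub_one_of_pos (show (0:ℝ) < (1+ε)⁻¹ by positivity)
    rw [Real.log_inv] at hlog
    have h4 : (1+ε)⁻¹ * (1+ε) = 1 := by field_simp
    nlinarith
  have h5 : ε / ((1-ε)*b) ≤ 1 + 3*ε := by
    rw [div_le_iff₀ (mul_pos (by linarith : (0:ℝ) < 1-ε) hLl)]
    nlinarith [hb'', sq_nonneg ε, mul_pos hε0 hLl]
  exact key.trans h5
end

section
/- For all reals ε with 0 < ε ≤ 1/3 and β, f > 0 with β/f ≤ ε·(1+ε)/log(1/(δL)) where δ = (1+ε)²/((1+ε)²L)^{1/ε} and L ≥ 2 an integer with δL < 1, the quantity β·log_{1+ε}((1+ε)²/δ)/f is at most 1 + 5ε. -/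
private lemma aux_ratio (ε : ℝ) (h0 : 0 < ε) (h1 : ε ≤ 1/3) :
    ε * (1 + ε) ≤ ε / (1 + ε) * ((1 - ε) * (1 + 5 * ε)) := by
  have h1ε : (0:ℝ) < 1 + ε := by linarith
  rw [div_mul_eq_mul_div, le_div_iff₀ h1ε]
  nlinarith [mul_nonneg h0.le (by linarith : (0:ℝ) ≤ 1 - 3*ε)]

/-- Approximation ratio for general edge lengths (w = ε): with
    δ = (1+ε)²/((1+ε)²L)^{1/ε}, δL < 1, and β/f ≤ ε(1+ε)/log(1/(δL)),
    the ratio β·log_{1+ε}((1+ε)²/δ)/f is at most 1 + 5ε. -/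
theorem approx_ratio_general (ε β f : ℝ) (L : ℕ)
    (hε0 : 0 < ε) (hε1 : ε ≤ 1 / 3) (hβ : 0 < β) (hf : 0 < f) (hL : 2 ≤ L) :
    let δ : ℝ := (1 + ε) ^ 2 / ((1 + ε) ^ 2 * (L : ℝ)) ^ (1 / ε)
    δ * (L : ℝ) < 1 →
    β / f ≤ ε * (1 + ε) / Real.log (1 / (δ * (L : ℝ))) →
      β * (Real.log ((1 + ε) ^ 2 / δ) / Real.log (1 + ε)) / f ≤ 1 + 5 * ε := by
  intro δ hδL hβf
  have hε1' : ε < 1 := lt_of_le_of_lt hε1 (by norm_num)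
  have hL2 : (2:ℝ) ≤ (L:ℝ) := by exact_mod_cast hL
  have h1ε : (0:ℝ) < 1 + ε := by linarith
  have hsq : (1:ℝ) ≤ (1 + ε)^2 := by nlinarith
  set x : ℝ := (1 + ε) ^ 2 * (L : ℝ) with hxdef
  have hx1 : (1:ℝ) < x := by nlinarith
  have hxpos : (0:ℝ) < x := by linarith
  have hlx : 0 < Real.log x := Real.log_pos hx1
  have hrp : (0:ℝ) < x ^ (1/ε) := Real.rpow_pos_of_pos hxpos _
  have hδeq : δ = (1 + ε)^2 / x ^ (1/ε) := rfl
  -- log ((1+ε)^2 / δ) = (1/ε) * log x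
  have h1 : (1 + ε)^2 / δ = x ^ (1/ε) := by
    rw [hδeq]
    field_simp
  have h2 : Real.log ((1 + ε)^2 / δ) = (1/ε) * Real.log x := by
    rw [h1, Real.log_rpow hxpos]
  -- 1 / (δ * L) = x ^ (1/ε - 1)
  have hδL' : δ * (L:ℝ) = x ^ (1 - 1/ε) := by
    rw [hδeq, Real.rpow_sub hxpos, Real.rpow_one]
    field_simp
    exact hxdef.symm
  have h3 : Real.log (1 / (δ * (L:ℝ))) = (1/ε - 1) * Real.log x := by
    rw [one_div, Real.log_inv, hδL', Real.log_rpow hxpos]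
    ring
  rw [h3] at hβf
  rw [h2]
  -- bound on log (1+ε)
  have hl2 : ε / (1 + ε) ≤ Real.log (1 + ε) := by
    have h := Real.log_le_sub_one_of_pos (show (0:ℝ) < 1/(1+ε) by positivity)
    rw [Real.log_div one_ne_zero (by linarith), Real.log_one] at h
    have : 1 / (1 + ε) - 1 = -(ε / (1 + ε)) := by field_simp; ring
    rw [this] at h
    linarith
  have hl2pos : 0 < Real.log (1 + ε) := Real.log_pos (by linarith)
  have hdpos : 0 < (1/ε - 1) * Real.log x := by
    have : 0 < 1/ε - 1 := by
      rw [sub_pos, lt_div_iff₀ hε0]; linarith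
    positivity
  -- main chain
  have hstuff : 0 ≤ (1/ε) * Real.log x / Real.log (1 + ε) := by positivity
  have step1 : β * ((1/ε) * Real.log x / Real.log (1 + ε)) / f
      = (β / f) * ((1/ε) * Real.log x / Real.log (1 + ε)) := by ring
  rw [step1]
  have step2 : (β / f) * ((1/ε) * Real.log x / Real.log (1 + ε))
      ≤ (ε * (1 + ε) / ((1/ε - 1) * Real.log x)) * ((1/ε) * Real.log x / Real.log (1 + ε)) :=
    mul_le_mul_of_nonneg_right hβf hstuff
  have step3 : (ε * (1 + ε) / ((1/ε - 1) * Real.log x)) * ((1/ε) * Real.log x / Real.log (1 + ε))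
      = ε * (1 + ε) / ((1 - ε) * Real.log (1 + ε)) := by
    have hεne : ε ≠ 0 := ne_of_gt hε0
    have hlxne : Real.log x ≠ 0 := ne_of_gt hlx
    have hl2ne : Real.log (1 + ε) ≠ 0 := ne_of_gt hl2pos
    have h1ε' : (1:ℝ) - ε ≠ 0 := by linarith
    field_simp
  rw [step3] at step2
  refine step2.trans ?_
  have hden : 0 < (1 - ε) * Real.log (1 + ε) := by
    have : (0:ℝ) < 1 - ε := by linarith
    positivity
  rw [div_le_iff₀ hden]
  have key : ε / (1 + ε) * ((1 - ε) * (1 + 5*ε)) ≤ Real.log (1 + ε) * ((1 - ε) * (1 + 5*ε)) := by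
    apply mul_le_mul_of_nonneg_right hl2
    nlinarith
  have h4 : ε * (1 + ε) ≤ ε / (1 + ε) * ((1 - ε) * (1 + 5*ε)) := aux_ratio ε hε0 hε1
  calc ε * (1 + ε) ≤ ε / (1 + ε) * ((1 - ε) * (1 + 5*ε)) := h4
    _ ≤ Real.log (1 + ε) * ((1 - ε) * (1 + 5*ε)) := key
    _ = (1 + 5*ε) * ((1 - ε) * Real.log (1 + ε)) := by ring
end
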